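/- Let (fₙ) be a sequence of orientation-preserving C¹ diffeomorphisms of [0,1] and f₀ a C¹ diffeomorphism with fₙ → f₀ and fₙ' → f₀' uniformly. Then for every ε > 0 there exists δ > 0 such that: whenever E ⊆ [0,1] is a Borel set with λ(E) < δ and (f_{n_i}) is any subsequence, there is a further subsequence (f_{n_{i_ℓ}}) with λ(f₀(E) ∪ ⋃_{ℓ≥1} f_{n_{i_ℓ}}(E)) < ε. -/

import Mathlib

/-!
All derivatives involved are eventually bounded by some `M`, so `fₙ` (for large `n`) and `f₀`
enlarge Lebesgue measure by a factor at most `M`. Take `δ = ε / 2M` and an open `U ⊇ E` with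
`λ(U) < δ`; then `S = f₀(U)` has measure at most `ε / 2`. For a compact `K ⊆ E`, some
`η`-neighbourhood of `K` lies in `U`; since `|f₀ y - f₀ x| ≥ m |y - x|` with `m = min f₀' > 0`
and `fₙ → f₀` uniformly, eventually every `fₙ(x)`, `x ∈ K`, equals `f₀(y)` with `|y - x| < η`,
so `fₙ(K) ⊆ S`. By inner regularity this gives `λ(fₙ(E) \ S) ≤ M λ(E \ K) → 0`, and a
subsequence along which these measures are summable with sum `< ε / 2` does the job.
-/

open MeasureTheory Set Filter Topology Metric

/-- An orientation-preserving `C¹` diffeomorphism of `[0,1]`. -/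
def IsDiffeo1 (u : ℝ → ℝ) : Prop :=
  ContDiffOn ℝ 1 u (Icc 0 1) ∧ u 0 = 0 ∧ u 1 = 1 ∧
    ∀ x ∈ Icc (0:ℝ) 1, 0 < derivWithin u (Icc 0 1) x

theorem volume_image_le_of_abs_derivWithin_le {u : ℝ → ℝ} {s t : Set ℝ} {M : ℝ}
    (hu : DifferentiableOn ℝ u t) (hs : MeasurableSet s) (hst : s ⊆ t)
    (hM : ∀ x ∈ s, |derivWithin u t x| ≤ M) :
    volume (u '' s) ≤ ENNReal.ofReal M * volume s :=
  calc volume (u '' s) ≤ ∫⁻ x in s, ENNReal.ofReal |derivWithin u t x| := by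
        simpa [ContinuousLinearMap.det_toSpanSingleton] using
          addHaar_image_le_lintegral_abs_det_fderiv volume hs
            fun x hx => ((hu x (hst hx)).hasDerivWithinAt.mono hst).hasFDerivWithinAt
    _ ≤ ∫⁻ _ in s, ENNReal.ofReal M :=
        setLIntegral_mono' hs fun x hx => ENNReal.ofReal_le_ofReal (hM x hx)
    _ = ENNReal.ofReal M * volume s := setLIntegral_const _ _

theorem TendstoUniformlyOn.eventually_abs_le {ι : Type*} {l : Filter ι} {F : ι → ℝ → ℝ}
    {g : ℝ → ℝ} {s : Set ℝ} {M M' : ℝ} (h : TendstoUniformlyOn F g l s)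
    (hg : ∀ x ∈ s, |g x| ≤ M) (hMM' : M < M') : ∀ᶠ k in l, ∀ x ∈ s, |F k x| ≤ M' := by
  filter_upwards [Metric.tendstoUniformlyOn_iff.1 h (M' - M) (sub_pos.2 hMM')] with k hk x hx
  have hdist : |g x - F k x| < M' - M := hk x hx
  linarith [abs_sub_abs_le_abs_sub (F k x) (g x), abs_sub_comm (g x) (F k x), hg x hx]

theorem image_subset_image_inter_of_dist_lt {X Y : Type*} [PseudoMetricSpace X]
    [PseudoMetricSpace Y] {g h : X → Y} {s K U : Set X} {m η : ℝ} (hm : 0 < m)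
    (hg : ∀ x ∈ s, ∀ y ∈ s, m * dist x y ≤ dist (g x) (g y)) (hKs : K ⊆ s)
    (hKU : thickening η K ⊆ U) (hh : MapsTo h K (g '' s))
    (hclose : ∀ x ∈ K, dist (g x) (h x) < m * η) :
    h '' K ⊆ g '' (U ∩ s) := by
  rintro _ ⟨x, hxK, rfl⟩
  obtain ⟨y, hys, hyx⟩ := hh hxK
  have hdist : m * dist y x < m * η := by
    calc m * dist y x ≤ dist (g y) (g x) := hg y hys x (hKs hxK)
      _ = dist (g x) (h x) := by rw [hyx, dist_comm]
      _ < m * η := hclose x hxK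
  exact ⟨y, ⟨hKU (mem_thickening_iff.2 ⟨x, hxK, lt_of_mul_lt_mul_left hdist hm.le⟩), hys⟩, hyx⟩

theorem exists_strictMono_measure_iUnion_lt {α : Type*} [MeasurableSpace α] {μ : Measure α}
    {T : ℕ → Set α} (hT : Tendsto (fun k => μ (T k)) atTop (𝓝 0)) {c : ENNReal} (hc : c ≠ 0) :
    ∃ φ : ℕ → ℕ, StrictMono φ ∧ μ (⋃ ℓ, T (φ ℓ)) < c := by
  obtain ⟨c', hc'0, hc'c⟩ := ENNReal.exists_pos_sum_of_countable hc ℕ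
  obtain ⟨φ, hφ, hφc'⟩ := extraction_forall_of_eventually fun ℓ =>
    (ENNReal.tendsto_nhds_zero.1 hT) (c' ℓ) (by simpa using hc'0 ℓ)
  refine ⟨φ, hφ, ?_⟩
  calc μ (⋃ ℓ, T (φ ℓ)) ≤ ∑' ℓ, μ (T (φ ℓ)) := measure_iUnion_le _
    _ ≤ ∑' ℓ, (c' ℓ : ENNReal) := ENNReal.tsum_le_tsum hφc'
    _ < c := hc'c

namespace IsDiffeo1

variable {u : ℝ → ℝ}

theorem differentiableOn (hu : IsDiffeo1 u) : DifferentiableOn ℝ u (Icc 0 1) :=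
  hu.1.differentiableOn one_ne_zero

theorem continuousOn_derivWithin (hu : IsDiffeo1 u) :
    ContinuousOn (derivWithin u (Icc 0 1)) (Icc 0 1) :=
  hu.1.continuousOn_derivWithin (uniqueDiffOn_Icc one_pos) le_rfl

theorem mul_sub_le_sub (hu : IsDiffeo1 u) {C : ℝ}
    (hC : ∀ x ∈ Icc (0:ℝ) 1, C ≤ derivWithin u (Icc 0 1) x) {x y : ℝ}
    (hx : x ∈ Icc (0:ℝ) 1) (hy : y ∈ Icc (0:ℝ) 1) (hxy : x ≤ y) : C * (y - x) ≤ u y - u x := by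
  refine (convex_Icc (0:ℝ) 1).mul_sub_le_image_sub_of_le_deriv hu.1.continuousOn
    (hu.differentiableOn.mono interior_subset) (fun z hz => ?_) x hx y hy hxy
  rw [interior_Icc] at hz
  rw [← derivWithin_of_mem_nhds (Icc_mem_nhds hz.1 hz.2)]
  exact hC z (Ioo_subset_Icc_self hz)

theorem mapsTo_Icc (hu : IsDiffeo1 u) : MapsTo u (Icc 0 1) (Icc 0 1) := fun x hx => by
  have hC : ∀ z ∈ Icc (0:ℝ) 1, 0 ≤ derivWithin u (Icc 0 1) z := fun z hz => (hu.2.2.2 z hz).le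
  have h0 := hu.mul_sub_le_sub hC (left_mem_Icc.2 zero_le_one) hx hx.1
  have h1 := hu.mul_sub_le_sub hC hx (right_mem_Icc.2 zero_le_one) hx.2
  rw [hu.2.1] at h0
  rw [hu.2.2.1] at h1
  constructor <;> linarith

theorem image_Icc (hu : IsDiffeo1 u) : u '' Icc 0 1 = Icc 0 1 := by
  refine (mapsTo_iff_image_subset.1 hu.mapsTo_Icc).antisymm ?_
  simpa [hu.2.1, hu.2.2.1] using intermediate_value_Icc zero_le_one hu.1.continuousOn

theorem exists_pos_mul_dist_le_dist (hu : IsDiffeo1 u) :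
    ∃ m > 0, ∀ x ∈ Icc (0:ℝ) 1, ∀ y ∈ Icc (0:ℝ) 1, m * dist x y ≤ dist (u x) (u y) := by
  obtain ⟨z, hz, hmin⟩ := isCompact_Icc.exists_isMinOn (nonempty_Icc.2 zero_le_one)
    hu.continuousOn_derivWithin
  refine ⟨_, hu.2.2.2 z hz, fun x hx y hy => ?_⟩
  have key : ∀ a ∈ Icc (0:ℝ) 1, ∀ b ∈ Icc (0:ℝ) 1, a ≤ b →
      derivWithin u (Icc 0 1) z * dist a b ≤ dist (u a) (u b) := fun a ha b hb hab => by
    rw [dist_comm a, dist_comm (u a), Real.dist_eq, abs_of_nonneg (sub_nonneg.2 hab)]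
    exact (hu.mul_sub_le_sub (fun w hw => hmin hw) ha hb hab).trans (le_abs_self _)
  rcases le_total x y with hxy | hyx
  · exact key x hx y hy hxy
  · simpa only [dist_comm] using key y hy x hx hyx

end IsDiffeo1

theorem exists_eventually_abs_derivWithin_le {ι : Type*} {l : Filter ι} {f : ι → ℝ → ℝ}
    {f₀ : ℝ → ℝ} (hf₀ : ContDiffOn ℝ 1 f₀ (Icc 0 1))
    (hconv' : TendstoUniformlyOn (fun k x => derivWithin (f k) (Icc 0 1) x)
      (derivWithin f₀ (Icc 0 1)) l (Icc 0 1)) :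
    ∃ M > 0, (∀ x ∈ Icc (0:ℝ) 1, |derivWithin f₀ (Icc 0 1) x| ≤ M) ∧
      ∀ᶠ k in l, ∀ x ∈ Icc (0:ℝ) 1, |derivWithin (f k) (Icc 0 1) x| ≤ M := by
  obtain ⟨C, hC⟩ := isCompact_Icc.exists_bound_of_continuousOn
    (hf₀.continuousOn_derivWithin (uniqueDiffOn_Icc one_pos) le_rfl)
  have hCabs : ∀ x ∈ Icc (0:ℝ) 1, |derivWithin f₀ (Icc 0 1) x| ≤ |C| :=
    fun x hx => (hC x hx).trans (le_abs_self C)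
  exact ⟨|C| + 1, by positivity, fun x hx => (hCabs x hx).trans (by linarith),
    hconv'.eventually_abs_le hCabs (lt_add_one _)⟩

theorem eventually_image_subset_image_inter {ι : Type*} {l : Filter ι} {f : ι → ℝ → ℝ}
    {f₀ : ℝ → ℝ} (hf : ∀ k, MapsTo (f k) (Icc 0 1) (Icc 0 1)) (hf₀ : IsDiffeo1 f₀)
    (hconv : TendstoUniformlyOn f f₀ l (Icc 0 1)) {K U : Set ℝ} (hK : IsCompact K)
    (hK1 : K ⊆ Icc 0 1) (hU : IsOpen U) (hKU : K ⊆ U) :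
    ∀ᶠ k in l, f k '' K ⊆ f₀ '' (U ∩ Icc 0 1) := by
  obtain ⟨m, hm, hf₀m⟩ := hf₀.exists_pos_mul_dist_le_dist
  obtain ⟨η, hη, hηU⟩ := hK.exists_thickening_subset_open hU hKU
  filter_upwards [Metric.tendstoUniformlyOn_iff.1 hconv (m * η) (by positivity)] with k hk
  refine image_subset_image_inter_of_dist_lt hm hf₀m hK1 hηU (fun x hx => ?_)
    fun x hx => hk x (hK1 hx)
  rw [hf₀.image_Icc]
  exact hf k (hK1 hx)

theorem tendsto_volume_image_sdiff_image_inter {ι : Type*} {l : Filter ι} {f : ι → ℝ → ℝ}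
    {f₀ : ℝ → ℝ} (hf : ∀ k, IsDiffeo1 (f k)) (hf₀ : IsDiffeo1 f₀)
    (hconv : TendstoUniformlyOn f f₀ l (Icc 0 1)) {M : ℝ}
    (hM : ∀ᶠ k in l, ∀ x ∈ Icc (0:ℝ) 1, |derivWithin (f k) (Icc 0 1) x| ≤ M)
    {E U : Set ℝ} (hE : MeasurableSet E) (hE1 : E ⊆ Icc 0 1) (hU : IsOpen U) (hEU : E ⊆ U) :
    Tendsto (fun k => volume (f k '' E \ f₀ '' (U ∩ Icc 0 1))) l (𝓝 0) := by
  refine ENNReal.tendsto_nhds_zero.2 fun c hc => ?_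
  obtain ⟨K, hKE, hK, hEK⟩ := hE.exists_isCompact_sdiff_lt
    ((measure_mono hE1).trans_lt (measure_Icc_lt_top (μ := volume))).ne
    (ENNReal.div_pos hc.ne' ENNReal.ofReal_ne_top).ne'
  filter_upwards [hM, eventually_image_subset_image_inter (fun k => (hf k).mapsTo_Icc) hf₀ hconv
    hK (hKE.trans hE1) hU (hKE.trans hEU)] with k hkM hkK
  have hsub : f k '' E \ f₀ '' (U ∩ Icc 0 1) ⊆ f k '' (E \ K) := by
    rintro _ ⟨⟨x, hxE, rfl⟩, hxS⟩
    exact ⟨x, ⟨hxE, fun hxK => hxS (hkK ⟨x, hxK, rfl⟩)⟩, rfl⟩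
  calc volume (f k '' E \ f₀ '' (U ∩ Icc 0 1)) ≤ volume (f k '' (E \ K)) := measure_mono hsub
    _ ≤ ENNReal.ofReal M * volume (E \ K) :=
        volume_image_le_of_abs_derivWithin_le (hf k).differentiableOn (hE.diff hK.measurableSet)
          (sdiff_subset.trans hE1) fun x hx => hkM x (hE1 hx.1)
    _ ≤ c := (ENNReal.mul_lt_of_lt_div' hEK).le

/-- Solecki's lemma: if `fₙ → f₀` and `fₙ' → f₀'` uniformly on `[0,1]`, then for every
`ε > 0` there is `δ > 0` such that for any Borel `E ⊆ [0,1]` with `λ(E) < δ` and any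
subsequence `(f_{n_i})`, some further subsequence `(f_{n_{i_ℓ}})` satisfies
`λ(f₀(E) ∪ ⋃_ℓ f_{n_{i_ℓ}}(E)) < ε`. -/
theorem solecki_lemma
    (f : ℕ → ℝ → ℝ) (f₀ : ℝ → ℝ)
    (hf : ∀ n, IsDiffeo1 (f n)) (hf₀ : IsDiffeo1 f₀)
    (hconv : TendstoUniformlyOn (fun n x => f n x) f₀ atTop (Icc 0 1))
    (hconv' : TendstoUniformlyOn (fun n x => derivWithin (f n) (Icc 0 1) x)
      (derivWithin f₀ (Icc 0 1)) atTop (Icc 0 1)) :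
    ∀ ε > (0:ℝ), ∃ δ > (0:ℝ), ∀ E : Set ℝ, MeasurableSet E → E ⊆ Icc 0 1 →
      volume E < ENNReal.ofReal δ →
      ∀ n : ℕ → ℕ, StrictMono n → ∃ φ : ℕ → ℕ, StrictMono φ ∧
        volume (f₀ '' E ∪ ⋃ ℓ : ℕ, f (n (φ ℓ)) '' E) < ENNReal.ofReal ε := by
  intro ε hε
  obtain ⟨M, hM, hf₀M, hfM⟩ := exists_eventually_abs_derivWithin_le hf₀.1 hconv'
  refine ⟨ε / (2 * M), by positivity, fun E hE hE1 hEδ n hn => ?_⟩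
  obtain ⟨U, hEU, hU, hUδ⟩ := E.exists_isOpen_lt_of_lt _ hEδ
  set S := f₀ '' (U ∩ Icc 0 1)
  have hS : volume S ≤ ENNReal.ofReal (ε / 2) :=
    calc volume S ≤ ENNReal.ofReal M * volume (U ∩ Icc 0 1) :=
          volume_image_le_of_abs_derivWithin_le hf₀.differentiableOn
            (hU.measurableSet.inter measurableSet_Icc) inter_subset_right fun x hx => hf₀M x hx.2
      _ ≤ ENNReal.ofReal M * ENNReal.ofReal (ε / (2 * M)) :=
          mul_le_mul_right ((measure_mono inter_subset_left).trans hUδ.le) _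
      _ = ENNReal.ofReal (ε / 2) := by
          rw [← ENNReal.ofReal_mul hM.le]
          congr 1
          field_simp
  obtain ⟨φ, hφ, hφS⟩ := exists_strictMono_measure_iUnion_lt
    ((tendsto_volume_image_sdiff_image_inter hf hf₀ hconv hfM hE hE1 hU hEU).comp
      hn.tendsto_atTop) (ENNReal.ofReal_pos.2 (half_pos hε)).ne'
  refine ⟨φ, hφ, ?_⟩
  calc volume (f₀ '' E ∪ ⋃ ℓ, f (n (φ ℓ)) '' E)
      ≤ volume (S ∪ ⋃ ℓ, (f (n (φ ℓ)) '' E \ S)) := by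
        rw [← iUnion_sdiff, union_sdiff_self]
        exact measure_mono (union_subset_union_left _ (image_mono (subset_inter hEU hE1)))
    _ ≤ volume S + volume (⋃ ℓ, (f (n (φ ℓ)) '' E \ S)) := measure_union_le _ _
    _ < ENNReal.ofReal (ε / 2) + ENNReal.ofReal (ε / 2) :=
        ENNReal.add_lt_add_of_le_of_lt (hS.trans_lt ENNReal.ofReal_lt_top).ne hS hφS
    _ = ENNReal.ofReal ε := by rw [← ENNReal.ofReal_add (by positivity) (by positivity), add_halves]
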